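/- Equivalent vertex structures have the same normal forms: if V ↓ V'' and Ψ ⊢ V ≡ V' : τ, then V' ↓ V''. -/
import Mathlib


/-- Availability annotations -/
inductive Avail : Type
  | avail : Avail
  | unavail : Avail
deriving DecidableEq

/-- Vertex structure (VS) types: single vertex, annotated products,
    type variables, corecursive types. -/
inductive VSTy : Type
  | vert : VSTy
  | prod : VSTy → Avail → VSTy → Avail → VSTy
  | tvar : ℕ → VSTy
  | corec : ℕ → VSTy → VSTy
deriving DecidableEq

/-- Substitution of a VS type for a type variable (capture-avoiding
    in the sense of not descending under a binder that rebinds `t`). -/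
def VSTy.subst (t : ℕ) (σ : VSTy) : VSTy → VSTy
  | .vert => .vert
  | .prod τ₁ a₁ τ₂ a₂ => .prod (VSTy.subst t σ τ₁) a₁ (VSTy.subst t σ τ₂) a₂
  | .tvar s => if s = t then σ else .tvar s
  | .corec s τ => if s = t then .corec s τ else .corec s (VSTy.subst t σ τ)

/-- VS subtyping. -/
inductive SubTy : VSTy → VSTy → Prop
  | refl (τ : VSTy) : SubTy τ τ
  | trans {τ τ'' τ' : VSTy} : SubTy τ τ'' → SubTy τ'' τ' → SubTy τ τ'
  | prodLeft (τ₁ : VSTy) (a₁ : Avail) (τ₂ : VSTy) (a₂ : Avail) (τ₃ : VSTy) :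
      SubTy (.prod τ₁ a₁ τ₂ a₂) (.prod τ₃ .unavail τ₂ a₂)
  | prodRight (τ₁ : VSTy) (a₁ : Avail) (τ₂ : VSTy) (a₂ : Avail) (τ₃ : VSTy) :
      SubTy (.prod τ₁ a₁ τ₂ a₂) (.prod τ₁ a₁ τ₃ .unavail)
  | prodCong {τ₁ τ₁' τ₂ τ₂' : VSTy} (a₁ a₂ : Avail) :
      SubTy τ₁ τ₁' → SubTy τ₂ τ₂' → SubTy (.prod τ₁ a₁ τ₂ a₂) (.prod τ₁' a₁ τ₂' a₂)
  | corec1 (t : ℕ) (τ : VSTy) : SubTy (.corec t τ) (VSTy.subst t (.corec t τ) τ)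
  | corec2 (t : ℕ) (τ : VSTy) : SubTy (VSTy.subst t (.corec t τ) τ) (.corec t τ)

/-- VS type splitting  τ ⇝ τ₁ ⋈ τ₂. -/
inductive VSplit : VSTy → VSTy → VSTy → Prop
  | prod (τ₁ τ₂ : VSTy) :
      VSplit (.prod τ₁ .avail τ₂ .avail)
            (.prod τ₁ .avail τ₂ .unavail)
            (.prod τ₁ .unavail τ₂ .avail)
  | both {τ₁ τ₁' τ₁'' τ₂ τ₂' τ₂'' : VSTy} :
      VSplit τ₁ τ₁' τ₁'' → VSplit τ₂ τ₂' τ₂'' →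
      VSplit (.prod τ₁ .avail τ₂ .avail)
            (.prod τ₁' .avail τ₂' .avail)
            (.prod τ₁'' .avail τ₂'' .avail)
  | left {τ₁ τ₁' τ₁'' : VSTy} (τ₂ : VSTy) (a : Avail) :
      VSplit τ₁ τ₁' τ₁'' →
      VSplit (.prod τ₁ .avail τ₂ a)
            (.prod τ₁' .avail τ₂ a)
            (.prod τ₁'' .avail τ₂ .unavail)
  | right {τ₂ τ₂' τ₂'' : VSTy} (τ₁ : VSTy) (a : Avail) :
      VSplit τ₂ τ₂' τ₂'' →
      VSplit (.prod τ₁ a τ₂ .avail)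
            (.prod τ₁ a τ₂' .avail)
            (.prod τ₁ .unavail τ₂'' .avail)
  | corec {t : ℕ} {τ τ₁ τ₂ : VSTy} :
      VSplit (VSTy.subst t (.corec t τ) τ) τ₁ τ₂ → VSplit (.corec t τ) τ₁ τ₂
  | sub {τ τ₁ τ₁' τ₂ : VSTy} :
      VSplit τ τ₁' τ₂ → SubTy τ₁' τ₁ → VSplit τ τ₁ τ₂
  | comm {τ τ₁ τ₂ : VSTy} : VSplit τ τ₂ τ₁ → VSplit τ τ₁ τ₂

/-- Names bound in contexts: VS variables or generators. -/
inductive VName : Type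
  | var : ℕ → VName
  | gen : ℕ → VName
deriving DecidableEq

/-- A context binds names to VS types. -/
abbrev Ctx := List (VName × VSTy)

/-- Affine context splitting  Ω ⇝ Ω₁ ⋈ Ω₂. -/
inductive CtxSplit : Ctx → Ctx → Ctx → Prop
  | empty : CtxSplit [] [] []
  | comm {Ω Ω₁ Ω₂ : Ctx} : CtxSplit Ω Ω₂ Ω₁ → CtxSplit Ω Ω₁ Ω₂
  | bind {Ω Ω₁ Ω₂ : Ctx} (x : VName) (τ : VSTy) :
      CtxSplit Ω Ω₁ Ω₂ → CtxSplit ((x, τ) :: Ω) ((x, τ) :: Ω₁) Ω₂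
  | typeSplit {Ω Ω₁ Ω₂ : Ctx} {τ τ₁ τ₂ : VSTy} (x : VName) :
      CtxSplit Ω Ω₁ Ω₂ → VSplit τ τ₁ τ₂ →
      CtxSplit ((x, τ) :: Ω) ((x, τ₁) :: Ω₁) ((x, τ₂) :: Ω₂)

/-- Vertex structures. -/
inductive VS : Type
  | var : ℕ → VS
  | gen : ℕ → VS
  | pair : VS → VS → VS
  | fst : VS → VS
  | snd : VS → VS
deriving DecidableEq

/-- Typing of vertex structures:  Ω; Ψ ⊢ V : τ, with affine context Ω
    and unrestricted context Ψ. -/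
inductive HasTy : Ctx → Ctx → VS → VSTy → Prop
  | omegaVar {Ω Ψ : Ctx} {u : ℕ} {τ : VSTy} :
      (VName.var u, τ) ∈ Ω → HasTy Ω Ψ (.var u) τ
  | psiVar {Ω Ψ : Ctx} {u : ℕ} {τ : VSTy} :
      (VName.var u, τ) ∈ Ψ → HasTy Ω Ψ (.var u) τ
  | omegaGen {Ω Ψ : Ctx} {g : ℕ} {τ : VSTy} :
      (VName.gen g, τ) ∈ Ω → HasTy Ω Ψ (.gen g) τ
  | psiGen {Ω Ψ : Ctx} {g : ℕ} {τ : VSTy} :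
      (VName.gen g, τ) ∈ Ψ → HasTy Ω Ψ (.gen g) τ
  | pair {Ω Ω₁ Ω₂ Ψ : Ctx} {V₁ V₂ : VS} {τ₁ τ₂ : VSTy} :
      CtxSplit Ω Ω₁ Ω₂ → HasTy Ω₁ Ψ V₁ τ₁ → HasTy Ω₂ Ψ V₂ τ₂ →
      HasTy Ω Ψ (.pair V₁ V₂) (.prod τ₁ .avail τ₂ .avail)
  | onlyLeftPair {Ω Ψ Ψ' : Ctx} {V₁ V₂ : VS} {τ₁ τ₂ : VSTy} :
      HasTy Ω Ψ V₁ τ₁ → HasTy [] Ψ' V₂ τ₂ →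
      HasTy Ω Ψ (.pair V₁ V₂) (.prod τ₁ .avail τ₂ .unavail)
  | onlyRightPair {Ω Ψ Ψ' : Ctx} {V₁ V₂ : VS} {τ₁ τ₂ : VSTy} :
      HasTy [] Ψ' V₁ τ₁ → HasTy Ω Ψ V₂ τ₂ →
      HasTy Ω Ψ (.pair V₁ V₂) (.prod τ₁ .unavail τ₂ .avail)
  | fst {Ω Ψ : Ctx} {V : VS} {τ₁ τ₂ : VSTy} {a : Avail} :
      HasTy Ω Ψ V (.prod τ₁ .avail τ₂ a) → HasTy Ω Ψ (.fst V) τ₁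
  | snd {Ω Ψ : Ctx} {V : VS} {τ₁ τ₂ : VSTy} {a : Avail} :
      HasTy Ω Ψ V (.prod τ₁ a τ₂ .avail) → HasTy Ω Ψ (.snd V) τ₂
  | sub {Ω Ψ : Ctx} {V : VS} {τ' τ : VSTy} :
      HasTy Ω Ψ V τ' → SubTy τ' τ → HasTy Ω Ψ V τ

/-- Big-step normalization of vertex structures  V ↓ V'. -/
inductive VNorm : VS → VS → Prop
  | var (u : ℕ) : VNorm (.var u) (.var u)
  | gen (g : ℕ) : VNorm (.gen g) (.gen g)
  | pair {V₁ V₁' V₂ V₂' : VS} :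
      VNorm V₁ V₁' → VNorm V₂ V₂' → VNorm (.pair V₁ V₂) (.pair V₁' V₂')
  | fstPair {V V₁ V₂ : VS} : VNorm V (.pair V₁ V₂) → VNorm (.fst V) V₁
  | fstNotPair {V V' : VS} :
      VNorm V V' → (∀ V₁ V₂, V' ≠ .pair V₁ V₂) → VNorm (.fst V) (.fst V')
  | sndPair {V V₁ V₂ : VS} : VNorm V (.pair V₁ V₂) → VNorm (.snd V) V₂
  | sndNotPair {V V' : VS} :
      VNorm V V' → (∀ V₁ V₂, V' ≠ .pair V₁ V₂) → VNorm (.snd V) (.snd V')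

/-- Vertex structure equivalence  Ψ ⊢ V ≡ V' : τ. -/
inductive VSEquiv : Ctx → VS → VS → VSTy → Prop
  | refl {Ψ : Ctx} {V : VS} {τ : VSTy} :
      HasTy [] Ψ V τ → VSEquiv Ψ V V τ
  | comm {Ψ : Ctx} {V V' : VS} {τ : VSTy} :
      VSEquiv Ψ V' V τ → VSEquiv Ψ V V' τ
  | trans {Ψ : Ctx} {V V'' V' : VS} {τ : VSTy} :
      VSEquiv Ψ V V'' τ → VSEquiv Ψ V'' V' τ → VSEquiv Ψ V V' τ
  | pair {Ψ : Ctx} {V₁ V₁' V₂ V₂' : VS} {τ₁ τ₂ : VSTy} :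
      VSEquiv Ψ V₁ V₁' τ₁ → VSEquiv Ψ V₂ V₂' τ₂ →
      VSEquiv Ψ (.pair V₁ V₂) (.pair V₁' V₂') (.prod τ₁ .avail τ₂ .avail)
  | onlyLeftPair {Ψ Ψ' : Ctx} {V₁ V₁' V₂ V₂' : VS} {τ₁ τ₂ : VSTy} :
      VSEquiv Ψ V₁ V₁' τ₁ → VSEquiv Ψ' V₂ V₂' τ₂ →
      VSEquiv Ψ (.pair V₁ V₂) (.pair V₁' V₂') (.prod τ₁ .avail τ₂ .unavail)
  | onlyRightPair {Ψ Ψ' : Ctx} {V₁ V₁' V₂ V₂' : VS} {τ₁ τ₂ : VSTy} :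
      VSEquiv Ψ' V₁ V₁' τ₁ → VSEquiv Ψ V₂ V₂' τ₂ →
      VSEquiv Ψ (.pair V₁ V₂) (.pair V₁' V₂') (.prod τ₁ .unavail τ₂ .avail)
  | fst {Ψ : Ctx} {V V' : VS} {τ₁ τ₂ : VSTy} {a : Avail} :
      VSEquiv Ψ V V' (.prod τ₁ .avail τ₂ a) → VSEquiv Ψ (.fst V) (.fst V') τ₁
  | snd {Ψ : Ctx} {V V' : VS} {τ₁ τ₂ : VSTy} {a : Avail} :
      VSEquiv Ψ V V' (.prod τ₁ a τ₂ .avail) → VSEquiv Ψ (.snd V) (.snd V') τ₂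
  | fstPair {Ψ : Ctx} {V V₁ V₂ : VS} {τ₁ τ₂ : VSTy} {a : Avail} :
      VSEquiv Ψ V (.pair V₁ V₂) (.prod τ₁ .avail τ₂ a) →
      VSEquiv Ψ (.fst V) V₁ τ₁
  | sndPair {Ψ : Ctx} {V V₁ V₂ : VS} {τ₁ τ₂ : VSTy} {a : Avail} :
      VSEquiv Ψ V (.pair V₁ V₂) (.prod τ₁ a τ₂ .avail) →
      VSEquiv Ψ (.snd V) V₂ τ₂
  | sub {Ψ : Ctx} {V V' : VS} {τ' τ : VSTy} :
      VSEquiv Ψ V V' τ' → SubTy τ' τ → VSEquiv Ψ V V' τ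

/-- VNeutral vertex structures: variables, generators, and their projections. -/
inductive VNeutral : VS → Prop
  | var (u : ℕ) : VNeutral (.var u)
  | gen (g : ℕ) : VNeutral (.gen g)
  | fst {V : VS} : VNeutral V → VNeutral (.fst V)
  | snd {V : VS} : VNeutral V → VNeutral (.snd V)

/-- VNormal vertex structures: neutral structures and pairs of normal structures. -/
inductive VNormal : VS → Prop
  | neutral {V : VS} : VNeutral V → VNormal V
  | pair {V₁ V₂ : VS} : VNormal V₁ → VNormal V₂ → VNormal (.pair V₁ V₂)

/-- Vertex paths: a generator followed by a sequence of projections. -/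
inductive IsPath : VS → Prop
  | gen (g : ℕ) : IsPath (.gen g)
  | fst {p : VS} : IsPath p → IsPath (.fst p)
  | snd {p : VS} : IsPath p → IsPath (.snd p)

/-- A context containing only generator bindings. -/
def GenOnly (Ω : Ctx) : Prop := ∀ e ∈ Ω, ∃ g τ, e = (VName.gen g, τ)

/-- Substitution of a vertex structure for a VS variable. -/
def VS.subst (u : ℕ) (W : VS) : VS → VS
  | .var v => if v = u then W else .var v
  | .gen g => .gen g
  | .pair V₁ V₂ => .pair (VS.subst u W V₁) (VS.subst u W V₂)
  | .fst V => .fst (VS.subst u W V)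
  | .snd V => .snd (VS.subst u W V)

theorem vnorm_total (V : VS) : ∃ V', VNorm V V' := by
  induction V with
  | var u => exact ⟨_, .var u⟩
  | gen g => exact ⟨_, .gen g⟩
  | pair V₁ V₂ ih₁ ih₂ =>
    obtain ⟨W₁, h₁⟩ := ih₁; obtain ⟨W₂, h₂⟩ := ih₂
    exact ⟨_, .pair h₁ h₂⟩
  | fst V ih =>
    obtain ⟨W, h⟩ := ih
    cases W with
    | pair W₁ W₂ => exact ⟨_, .fstPair h⟩
    | var u => exact ⟨_, .fstNotPair h (by intro _ _ hc; cases hc)⟩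
    | gen g => exact ⟨_, .fstNotPair h (by intro _ _ hc; cases hc)⟩
    | fst W' => exact ⟨_, .fstNotPair h (by intro _ _ hc; cases hc)⟩
    | snd W' => exact ⟨_, .fstNotPair h (by intro _ _ hc; cases hc)⟩
  | snd V ih =>
    obtain ⟨W, h⟩ := ih
    cases W with
    | pair W₁ W₂ => exact ⟨_, .sndPair h⟩
    | var u => exact ⟨_, .sndNotPair h (by intro _ _ hc; cases hc)⟩
    | gen g => exact ⟨_, .sndNotPair h (by intro _ _ hc; cases hc)⟩
    | fst W' => exact ⟨_, .sndNotPair h (by intro _ _ hc; cases hc)⟩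
    | snd W' => exact ⟨_, .sndNotPair h (by intro _ _ hc; cases hc)⟩

theorem equiv_norm_iff {Ψ : Ctx} {V V' : VS} {τ : VSTy}
    (he : VSEquiv Ψ V V' τ) : ∀ W, VNorm V W ↔ VNorm V' W := by
  induction he with
  | refl _ => exact fun W => Iff.rfl
  | comm _ ih => exact fun W => (ih W).symm
  | trans _ _ ih₁ ih₂ => exact fun W => (ih₁ W).trans (ih₂ W)
  | pair _ _ ih₁ ih₂ =>
    intro W
    constructor
    · intro h
      cases h with
      | pair ha hb => exact .pair ((ih₁ _).mp ha) ((ih₂ _).mp hb)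
    · intro h
      cases h with
      | pair ha hb => exact .pair ((ih₁ _).mpr ha) ((ih₂ _).mpr hb)
  | onlyLeftPair _ _ ih₁ ih₂ =>
    intro W
    constructor
    · intro h
      cases h with
      | pair ha hb => exact .pair ((ih₁ _).mp ha) ((ih₂ _).mp hb)
    · intro h
      cases h with
      | pair ha hb => exact .pair ((ih₁ _).mpr ha) ((ih₂ _).mpr hb)
  | onlyRightPair _ _ ih₁ ih₂ =>
    intro W
    constructor
    · intro h
      cases h with
      | pair ha hb => exact .pair ((ih₁ _).mp ha) ((ih₂ _).mp hb)
    · intro h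
      cases h with
      | pair ha hb => exact .pair ((ih₁ _).mpr ha) ((ih₂ _).mpr hb)
  | fst _ ih =>
    intro W
    constructor
    · intro h
      cases h with
      | fstPair hp => exact .fstPair ((ih _).mp hp)
      | fstNotPair hn hne => exact .fstNotPair ((ih _).mp hn) hne
    · intro h
      cases h with
      | fstPair hp => exact .fstPair ((ih _).mpr hp)
      | fstNotPair hn hne => exact .fstNotPair ((ih _).mpr hn) hne
  | snd _ ih =>
    intro W
    constructor
    · intro h
      cases h with
      | sndPair hp => exact .sndPair ((ih _).mp hp)
      | sndNotPair hn hne => exact .sndNotPair ((ih _).mp hn) hne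
    · intro h
      cases h with
      | sndPair hp => exact .sndPair ((ih _).mpr hp)
      | sndNotPair hn hne => exact .sndNotPair ((ih _).mpr hn) hne
  | @fstPair _ _ V₁ V₂ _ _ _ _ ih =>
    intro W
    constructor
    · intro h
      cases h with
      | fstPair hp =>
        have hpp := (ih _).mp hp
        cases hpp with
        | pair ha hb => exact ha
      | fstNotPair hn hne =>
        have hpp := (ih _).mp hn
        cases hpp with
        | pair ha hb => exact absurd rfl (hne _ _)
    · intro h
      obtain ⟨W₂, h₂⟩ := vnorm_total V₂
      exact .fstPair ((ih _).mpr (.pair h h₂))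
  | @sndPair _ _ V₁ V₂ _ _ _ _ ih =>
    intro W
    constructor
    · intro h
      cases h with
      | sndPair hp =>
        have hpp := (ih _).mp hp
        cases hpp with
        | pair ha hb => exact hb
      | sndNotPair hn hne =>
        have hpp := (ih _).mp hn
        cases hpp with
        | pair ha hb => exact absurd rfl (hne _ _)
    · intro h
      obtain ⟨W₁, h₁⟩ := vnorm_total V₁
      exact .sndPair ((ih _).mpr (.pair h₁ h))
  | sub _ _ ih => exact ih

/-- equivalent vertex structures have the same normal forms. -/
theorem norm_respects_equiv {Ψ : Ctx} {V V' V'' : VS} {τ : VSTy}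
    (hn : VNorm V V'') (he : VSEquiv Ψ V V' τ) : VNorm V' V'' := by
  exact (equiv_norm_iff he V'').mp hn
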